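/- arXiv:1304.2315 — 2 statements merged into one kernel-verified Lean document; each statement's English description precedes it below -/
import Mathlib

section
/- If ρ₁ and ρ₂ are the two roots of a x² + b x + c = 0 with 0 < ρ₁ < ρ₂, and m > −1, n > −1, then ∫₀^{ρ₁} x^m (a x² + b x + c)^n dx = c^n ρ₁^{m+1} Γ(m+1) Γ(n+1)/Γ(m+n+2) · ₂F₁(m+1, −n; m+n+2; ρ₁/ρ₂). -/
open Real MeasureTheory intervalIntegral

/-- Pochhammer symbol `(s)_k` for real `s`. -/
noncomputable def rpoch (s : ℝ) (k : ℕ) : ℝ := ∏ i ∈ Finset.range k, (s + i)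

/-- Gauss hypergeometric function `₂F₁` (real). -/
noncomputable def hyp2F1 (a b c z : ℝ) : ℝ :=
  ∑' n : ℕ, rpoch a n * rpoch b n / (rpoch c n * (n.factorial : ℝ)) * z ^ n

/-!
With `z = ρ₁ / ρ₂`, Vieta gives `a x² + b x + c = c (1 - x / ρ₁) (1 - x / ρ₂)`, so the substitution
`x = ρ₁ t` turns the integral into `c ^ n ρ₁ ^ (m + 1) ∫₀¹ tᵐ (1 - t)ⁿ (1 - z t)ⁿ dt`, an instance
of Euler's integral for `₂F₁`. Since `0 < z < 1`, expanding `(1 - z t)ⁿ` by the binomial series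
and integrating term by term (dominated by a multiple of `tᵐ (1 - t)ⁿ`) yields Beta integrals
`B(m + k + 1, n + 1)`, and their Gamma quotients are the coefficients of `₂F₁(m+1, -n; m+n+2; z)`.
-/

open Set
open scoped Nat

lemma rpoch_eq_ascPochhammer_eval (s : ℝ) (k : ℕ) : rpoch s k = (ascPochhammer ℝ k).eval s := by
  induction k with
  | zero => simp [rpoch]
  | succ k ih => rw [rpoch, Finset.prod_range_succ, ← rpoch, ih, ascPochhammer_succ_eval]

lemma rpoch_pos {s : ℝ} (hs : 0 < s) (k : ℕ) : 0 < rpoch s k :=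
  Finset.prod_pos fun i _ => by positivity

lemma rpoch_neg (p : ℝ) (k : ℕ) : rpoch (-p) k = (-1) ^ k * k ! * Ring.choose p k := by
  rw [rpoch_eq_ascPochhammer_eval, ← Polynomial.ascPochhammer_smeval_eq_eval,
    Polynomial.ascPochhammer_smeval_neg_eq_descPochhammer,
    Ring.descPochhammer_eq_factorial_smul_choose]
  simp [Int.negOnePow, Units.smul_def, nsmul_eq_mul, mul_assoc]

lemma binomialSeries_apply_neg (s w : ℝ) (k : ℕ) :
    binomialSeries ℝ (-s) k (fun _ => -w) = rpoch s k / k ! * w ^ k := by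
  rw [← neg_neg s, rpoch_neg]
  simp only [binomialSeries, FormalMultilinearSeries.apply_eq_prod_smul_coeff,
    Finset.prod_const, Finset.card_univ, Fintype.card_fin,
    FormalMultilinearSeries.coeff_ofScalars, smul_eq_mul, neg_neg]
  field_simp
  ring

lemma hasSum_rpoch_div_factorial_mul_pow (s : ℝ) {w : ℝ} (hw : |w| < 1) :
    HasSum (fun k : ℕ => rpoch s k / k ! * w ^ k) ((1 - w) ^ (-s)) := by
  have hball : -w ∈ Metric.eball (0 : ℝ) 1 := by simpa [edist_dist] using hw
  have h := (one_add_rpow_hasFPowerSeriesOnBall_zero (a := -s)).hasSum hball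
  simp only [binomialSeries_apply_neg] at h
  rwa [zero_add, ← sub_eq_add_neg] at h

lemma summable_abs_rpoch_div_factorial_mul_pow (s : ℝ) {w : ℝ} (hw : |w| < 1) :
    Summable (fun k : ℕ => |rpoch s k / k ! * w ^ k|) := by
  have hball : -w ∈ Metric.eball (0 : ℝ) (binomialSeries ℝ (-s)).radius :=
    Metric.eball_subset_eball (one_add_rpow_hasFPowerSeriesOnBall_zero (a := -s)).r_le
      (by simpa [edist_dist] using hw)
  have h := (binomialSeries ℝ (-s)).summable_norm_apply hball
  simp only [binomialSeries_apply_neg, Real.norm_eq_abs] at h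
  exact h

lemma Gamma_add_nat_eq_mul_rpoch {s : ℝ} (hs : 0 < s) (k : ℕ) :
    Gamma (s + k) = Gamma s * rpoch s k := by
  induction k with
  | zero => simp [rpoch]
  | succ k ih =>
    have hsk : 0 < s + k := by positivity
    rw [Nat.cast_succ, ← add_assoc, Gamma_add_one hsk.ne', ih]
    simp only [rpoch, Finset.prod_range_succ]
    ring

lemma ofReal_cpow_mul_one_sub_cpow {x : ℝ} (hx : x ∈ Icc (0 : ℝ) 1) (u v : ℝ) :
    (x : ℂ) ^ ((u : ℂ) - 1) * (1 - (x : ℂ)) ^ ((v : ℂ) - 1) =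
      ((x ^ (u - 1) * (1 - x) ^ (v - 1) : ℝ) : ℂ) := by
  have h1x : 0 ≤ 1 - x := sub_nonneg.mpr hx.2
  rw [Complex.ofReal_mul, Complex.ofReal_cpow hx.1, Complex.ofReal_cpow h1x]
  push_cast
  rfl

lemma integral_rpow_mul_one_sub_rpow {u v : ℝ} (hu : 0 < u) (hv : 0 < v) :
    ∫ t in (0 : ℝ)..1, t ^ (u - 1) * (1 - t) ^ (v - 1) = Gamma u * Gamma v / Gamma (u + v) := by
  have hB := Complex.betaIntegral_eq_Gamma_mul_div u v (by simpa) (by simpa)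
  rw [Complex.betaIntegral, integral_congr fun x hx =>
      ofReal_cpow_mul_one_sub_cpow (uIcc_of_le (zero_le_one' ℝ) ▸ hx) u v,
    intervalIntegral.integral_ofReal, ← Complex.ofReal_add, Complex.Gamma_ofReal,
    Complex.Gamma_ofReal, Complex.Gamma_ofReal] at hB
  exact_mod_cast hB

lemma intervalIntegrable_rpow_mul_one_sub_rpow {u v : ℝ} (hu : 0 < u) (hv : 0 < v) :
    IntervalIntegrable (fun t : ℝ => t ^ (u - 1) * (1 - t) ^ (v - 1)) volume 0 1 :=
  intervalIntegrable_of_integral_ne_zero <| by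
    rw [integral_rpow_mul_one_sub_rpow hu hv]
    exact (div_pos (mul_pos (Gamma_pos_of_pos hu) (Gamma_pos_of_pos hv))
      (Gamma_pos_of_pos (add_pos hu hv))).ne'

/-- The constant term `c` of the quadratic may be negative; for `x < 0` both sides carry the same
factor `cos (e * π)` of `Real.rpow`. -/
lemma mul_rpow_of_nonneg_right (x : ℝ) {y : ℝ} (hy : 0 ≤ y) (e : ℝ) :
    (x * y) ^ e = x ^ e * y ^ e := by
  rcases le_or_gt 0 x with hx | hx
  · exact mul_rpow hx hy
  rcases hy.eq_or_lt with rfl | hy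
  · rcases eq_or_ne e 0 with rfl | he
    · simp
    · simp [zero_rpow he]
  rw [rpow_def_of_neg (mul_neg_of_neg_of_pos hx hy), rpow_def_of_neg hx,
    log_mul hx.ne hy.ne', rpow_def_of_pos hy, add_mul, exp_add]
  ring

lemma quadratic_eq_mul_one_sub_div_mul_one_sub_div {a b c r s : ℝ} (hr : r ≠ 0) (hs : s ≠ 0)
    (hrs : r ≠ s) (hr_root : a * r ^ 2 + b * r + c = 0) (hs_root : a * s ^ 2 + b * s + c = 0)
    (x : ℝ) : a * x ^ 2 + b * x + c = c * ((1 - x / r) * (1 - x / s)) := by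
  have hb : b = -(a * (r + s)) := by
    have h : (r - s) * (a * (r + s) + b) = 0 := by linear_combination hr_root - hs_root
    linear_combination (mul_eq_zero.mp h).resolve_left (sub_ne_zero.mpr hrs)
  have hc : c = a * r * s := by linear_combination hr_root - r * hb
  subst hb hc
  field_simp
  ring

lemma hyp2F1_comm (a b c z : ℝ) : hyp2F1 a b c z = hyp2F1 b a c z := by
  simp only [hyp2F1, mul_comm (rpoch a _)]

section Euler

variable (a : ℝ) {b c z : ℝ}

lemma hasSum_euler_integrand {t : ℝ} (ht : t ∈ Ioc (0 : ℝ) 1) (hz : |z| < 1) :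
    HasSum (fun k : ℕ => rpoch a k / k ! * z ^ k * (t ^ (b + k - 1) * (1 - t) ^ (c - b - 1)))
      (t ^ (b - 1) * (1 - t) ^ (c - b - 1) * (1 - z * t) ^ (-a)) := by
  have hzt : |z * t| < 1 := by
    rw [abs_mul, abs_of_pos ht.1]
    nlinarith [abs_nonneg z, ht.2]
  have hterm (k : ℕ) : rpoch a k / k ! * z ^ k * (t ^ (b + k - 1) * (1 - t) ^ (c - b - 1)) =
      t ^ (b - 1) * (1 - t) ^ (c - b - 1) * (rpoch a k / k ! * (z * t) ^ k) := by
    rw [show b + k - 1 = b - 1 + k by ring, rpow_add ht.1, rpow_natCast, mul_pow]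
    ring
  simpa only [hterm] using (hasSum_rpoch_div_factorial_mul_pow a hzt).mul_left
    (t ^ (b - 1) * (1 - t) ^ (c - b - 1))

lemma norm_euler_term_le {t : ℝ} (ht : t ∈ Ioc (0 : ℝ) 1) (k : ℕ) :
    ‖rpoch a k / k ! * z ^ k * (t ^ (b + k - 1) * (1 - t) ^ (c - b - 1))‖ ≤
      |rpoch a k / k ! * z ^ k| * (t ^ (b - 1) * (1 - t) ^ (c - b - 1)) := by
  have h1t : 0 ≤ 1 - t := sub_nonneg.mpr ht.2
  rw [Real.norm_eq_abs, abs_mul,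
    abs_of_nonneg (mul_nonneg (rpow_nonneg ht.1.le _) (rpow_nonneg h1t _))]
  refine mul_le_mul_of_nonneg_left (mul_le_mul_of_nonneg_right ?_ (rpow_nonneg h1t _))
    (abs_nonneg _)
  exact rpow_le_rpow_of_exponent_ge ht.1 ht.2 (by linarith [k.cast_nonneg (α := ℝ)])

lemma integral_euler_term (hb : 0 < b) (hbc : b < c) (k : ℕ) :
    ∫ t in (0 : ℝ)..1, rpoch a k / k ! * z ^ k * (t ^ (b + k - 1) * (1 - t) ^ (c - b - 1)) =
      Gamma b * Gamma (c - b) / Gamma c * (rpoch a k * rpoch b k / (rpoch c k * k !) * z ^ k) := by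
  have hc : 0 < c := hb.trans hbc
  rw [intervalIntegral.integral_const_mul,
    integral_rpow_mul_one_sub_rpow (by positivity) (sub_pos.mpr hbc),
    show b + k + (c - b) = c + k by ring, Gamma_add_nat_eq_mul_rpoch hb,
    Gamma_add_nat_eq_mul_rpoch hc]
  have := (rpoch_pos hc k).ne'
  have := (Gamma_pos_of_pos hc).ne'
  field_simp

theorem integral_euler_eq_hyp2F1 (hb : 0 < b) (hbc : b < c) (hz : |z| < 1) :
    ∫ t in (0 : ℝ)..1, t ^ (b - 1) * (1 - t) ^ (c - b - 1) * (1 - z * t) ^ (-a) =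
      Gamma b * Gamma (c - b) / Gamma c * hyp2F1 a b c z := by
  have hcb : 0 < c - b := sub_pos.mpr hbc
  have hg := intervalIntegrable_rpow_mul_one_sub_rpow hb hcb
  have hsum := intervalIntegral.hasSum_integral_of_dominated_convergence (μ := volume)
    (a := 0) (b := 1)
    (F := fun (k : ℕ) t => rpoch a k / k ! * z ^ k * (t ^ (b + k - 1) * (1 - t) ^ (c - b - 1)))
    (f := fun t => t ^ (b - 1) * (1 - t) ^ (c - b - 1) * (1 - z * t) ^ (-a))
    (fun k t => |rpoch a k / k ! * z ^ k| * (t ^ (b - 1) * (1 - t) ^ (c - b - 1)))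
    (fun k => ((intervalIntegrable_rpow_mul_one_sub_rpow (u := b + k) (by positivity)
      hcb).const_mul _).aestronglyMeasurable_restrict_uIoc)
    (fun k => ae_of_all _ fun t ht => norm_euler_term_le a (uIoc_of_le (zero_le_one' ℝ) ▸ ht) k)
    (ae_of_all _ fun t _ => (summable_abs_rpoch_div_factorial_mul_pow a hz).mul_right _)
    (by simpa only [tsum_mul_right] using hg.const_mul _)
    (ae_of_all _ fun t ht => hasSum_euler_integrand a (uIoc_of_le (zero_le_one' ℝ) ▸ ht) hz)
  simp only [integral_euler_term a hb hbc] at hsum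
  rw [hyp2F1, ← tsum_mul_left, hsum.tsum_eq]

end Euler

theorem stmt1_general (a b c ρ₁ ρ₂ m n : ℝ)
    (hρ : 0 < ρ₁) (hρ' : ρ₁ < ρ₂)
    (hroot₁ : a * ρ₁ ^ 2 + b * ρ₁ + c = 0) (hroot₂ : a * ρ₂ ^ 2 + b * ρ₂ + c = 0)
    (hm : -1 < m) (hn : -1 < n) :
    (∫ x in (0:ℝ)..ρ₁, x ^ m * (a * x ^ 2 + b * x + c) ^ n) =
      c ^ n * ρ₁ ^ (m + 1) * Real.Gamma (m + 1) * Real.Gamma (n + 1) /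
        Real.Gamma (m + n + 2) * hyp2F1 (m + 1) (-n) (m + n + 2) (ρ₁ / ρ₂) := by
  have hρ₂ : 0 < ρ₂ := hρ.trans hρ'
  have hz : |ρ₁ / ρ₂| < 1 := by
    rw [abs_of_pos (div_pos hρ hρ₂)]
    exact (div_lt_one hρ₂).mpr hρ'
  have hscaled (t : ℝ) (ht : t ∈ uIcc (0 : ℝ) 1) :
      (ρ₁ * t) ^ m * (a * (ρ₁ * t) ^ 2 + b * (ρ₁ * t) + c) ^ n = ρ₁ ^ m * c ^ n *
        (t ^ (m + 1 - 1) * (1 - t) ^ (m + n + 2 - (m + 1) - 1) * (1 - ρ₁ / ρ₂ * t) ^ (-(-n))) := by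
    rw [uIcc_of_le zero_le_one] at ht
    have h1t : 0 ≤ 1 - t := sub_nonneg.mpr ht.2
    have h1zt : 0 ≤ 1 - ρ₁ / ρ₂ * t := by
      nlinarith [(div_lt_one hρ₂).mpr hρ', div_pos hρ hρ₂, ht.2]
    rw [quadratic_eq_mul_one_sub_div_mul_one_sub_div hρ.ne' hρ₂.ne' hρ'.ne hroot₁ hroot₂,
      mul_div_cancel_left₀ t hρ.ne', mul_div_right_comm, mul_rpow hρ.le ht.1,
      mul_rpow_of_nonneg_right c (mul_nonneg h1t h1zt), mul_rpow h1t h1zt]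
    ring_nf
  calc (∫ x in (0:ℝ)..ρ₁, x ^ m * (a * x ^ 2 + b * x + c) ^ n)
      = ρ₁ * ∫ t in (0:ℝ)..1, (ρ₁ * t) ^ m * (a * (ρ₁ * t) ^ 2 + b * (ρ₁ * t) + c) ^ n := by
        rw [← smul_eq_mul, smul_integral_comp_mul_left
          (fun x => x ^ m * (a * x ^ 2 + b * x + c) ^ n), mul_zero, mul_one]
    _ = ρ₁ * (ρ₁ ^ m * c ^ n * (Gamma (m + 1) * Gamma (m + n + 2 - (m + 1)) / Gamma (m + n + 2) *
          hyp2F1 (-n) (m + 1) (m + n + 2) (ρ₁ / ρ₂))) := by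
        rw [integral_congr hscaled, intervalIntegral.integral_const_mul,
          integral_euler_eq_hyp2F1 (-n) (by linarith) (by linarith) hz]
    _ = _ := by
        rw [hyp2F1_comm, show m + n + 2 - (m + 1) = n + 1 by ring, rpow_add_one hρ.ne']
        ring

theorem stmt1 (a b c ρ₁ ρ₂ m n : ℝ)
    (hρ : 0 < ρ₁) (hρ' : ρ₁ < ρ₂)
    (hroot₁ : a * ρ₁ ^ 2 + b * ρ₁ + c = 0) (hroot₂ : a * ρ₂ ^ 2 + b * ρ₂ + c = 0)
    (ha : a ≠ 0) (hm : -1 < m) (hn : -1 < n) :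
    (∫ x in (0:ℝ)..ρ₁, x ^ m * (a * x ^ 2 + b * x + c) ^ n) =
      c ^ n * ρ₁ ^ (m + 1) * Real.Gamma (m + 1) * Real.Gamma (n + 1) /
        Real.Gamma (m + n + 2) * hyp2F1 (m + 1) (-n) (m + n + 2) (ρ₁ / ρ₂) :=
  stmt1_general a b c ρ₁ ρ₂ m n hρ hρ' hroot₁ hroot₂ hm hn
end

section
/- log(1 + 2/√3) = Σ_{n=0}^{∞} [Σ_{λ=0}^{n} (C(n,λ) (1/2)_λ/((1/2 − n)_λ)) ((1 − i√3)/2)^λ] · (1/2)_n/((n+1)!) · (2i/(√3 − i))^n, and in particular this doubly-indexed series converges to a real number. -/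
/-
Write `ω = (-1 + i√3)/2`, so that the inner ratio is `-ω` and the outer one is `ω`, and
`c_l = (1/2)_l / l! = C(2l, l) / 4^l`. The reflection `(-1)^l (1/2 - n)_l (1/2)_{n-l} = (1/2)_n`
turns the `n`-th term into `P_n / (n + 1)` with `P_n = ∑_l c_l c_{n-l} ω^{n+l}`, the Taylor
coefficients of `(1 - ω²u)^(-1/2) (1 - ωu)^(-1/2) = (1 + u + u²)^(-1/2)`. Hence the series is
`∫₀¹ (1 + u + u²)^(-1/2) du = arsinh √3 - arsinh (1/√3) = log (1 + 2/√3)`, integrated termwise.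
Summation by parts against the bounded partial sums of `ω^j` gives `|P_n| ≤ 3 c_n`, and
`c_n / (n + 1) = 2 (c_n - c_{n+1})` telescopes, which justifies the termwise integration.
-/

open Complex Finset

/-- Pochhammer symbol `(s)_k` for complex `s`. -/
noncomputable def cpoch (s : ℂ) (k : ℕ) : ℂ := ∏ i ∈ Finset.range k, (s + i)

/-- The general term of the double series for `log (1 + 2/√3)`. -/
noncomputable def stmt4Term (n : ℕ) : ℂ :=
  (∑ l ∈ Finset.range (n + 1),
      (n.choose l : ℂ) * cpoch (1 / 2) l / cpoch (1 / 2 - (n : ℂ)) l *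
        ((1 - Complex.I * Real.sqrt 3) / 2) ^ l) *
    cpoch (1 / 2) n / ((n + 1).factorial : ℂ) *
    (2 * Complex.I / ((Real.sqrt 3 : ℂ) - Complex.I)) ^ n

namespace LogSeries

open MeasureTheory
open scoped ComplexConjugate

lemma norm_sum_range_smul_le {E : Type*} [SeminormedAddCommGroup E] [NormedSpace ℝ E]
    (f : ℕ → ℝ) (g : ℕ → E) (n : ℕ) {M : ℝ} (hg : ∀ m, ‖∑ j ∈ range m, g j‖ ≤ M) :
    ‖∑ i ∈ range (n + 1), f i • g i‖ ≤ (|f n| + ∑ i ∈ range n, |f (i + 1) - f i|) * M := by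
  rw [sum_range_by_parts, Nat.add_sub_cancel, add_mul, sum_mul]
  refine (norm_sub_le _ _).trans
    (add_le_add ?_ ((norm_sum_le _ _).trans (sum_le_sum fun i _ => ?_)))
  all_goals
    rw [norm_smul, Real.norm_eq_abs]
    exact mul_le_mul_of_nonneg_left (hg _) (abs_nonneg _)

lemma sum_range_abs_sub_eq_of_antitone_monotone (f : ℕ → ℝ) {m n : ℕ} (hmn : m ≤ n)
    (hanti : ∀ i < m, f (i + 1) ≤ f i) (hmono : ∀ i, m ≤ i → i < n → f i ≤ f (i + 1)) :
    ∑ i ∈ range n, |f (i + 1) - f i| = f 0 + f n - 2 * f m := by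
  rw [← sum_range_add_sum_Ico _ hmn,
    sum_congr rfl fun i hi => abs_of_nonpos (sub_nonpos.2 (hanti i (mem_range.1 hi))),
    sum_congr rfl fun i hi =>
      abs_of_nonneg (sub_nonneg.2 (hmono i (mem_Ico.1 hi).1 (mem_Ico.1 hi).2)),
    sum_Ico_eq_sub _ hmn, sum_range_sub, sum_range_sub]
  simp only [neg_sub, sum_range_sub']
  ring

/-- `(1/2)_n / n!`, the Taylor coefficients of `(1 - x)^(-1/2)`. -/
noncomputable def centralBinomRatio (n : ℕ) : ℝ := Nat.centralBinom n / 4 ^ n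

lemma centralBinomRatio_zero : centralBinomRatio 0 = 1 := by simp [centralBinomRatio]

lemma centralBinomRatio_succ (n : ℕ) :
    centralBinomRatio (n + 1) = centralBinomRatio n * ((2 * n + 1) / (2 * n + 2)) := by
  have h : ((n + 1 : ℕ) : ℝ) * Nat.centralBinom (n + 1)
      = 2 * (2 * n + 1) * Nat.centralBinom n := by
    exact_mod_cast Nat.succ_mul_centralBinom_succ n
  push_cast at h
  rw [centralBinomRatio, centralBinomRatio, pow_succ]
  field_simp
  linear_combination 2 * h

lemma centralBinomRatio_pos (n : ℕ) : 0 < centralBinomRatio n := by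
  unfold centralBinomRatio
  have := Nat.centralBinom_pos n
  positivity

lemma centralBinomRatio_le_one (n : ℕ) : centralBinomRatio n ≤ 1 := by
  rw [centralBinomRatio, div_le_one (by positivity)]
  exact_mod_cast Nat.centralBinom_le_four_pow n

lemma centralBinomRatio_sub_succ (n : ℕ) :
    centralBinomRatio n - centralBinomRatio (n + 1) = centralBinomRatio n / (2 * (n + 1)) := by
  rw [centralBinomRatio_succ]
  field_simp
  ring

lemma centralBinomRatio_succ_mul_le {i j : ℕ} (hij : i ≤ j) :
    centralBinomRatio (i + 1) * centralBinomRatio j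
      ≤ centralBinomRatio i * centralBinomRatio (j + 1) := by
  have hr : ((2 * i + 1) / (2 * i + 2) : ℝ) ≤ (2 * j + 1) / (2 * j + 2) := by
    have : (i : ℝ) ≤ j := by exact_mod_cast hij
    rw [div_le_div_iff₀ (by positivity) (by positivity)]
    linarith
  have := mul_le_mul_of_nonneg_left hr
    (mul_pos (centralBinomRatio_pos i) (centralBinomRatio_pos j)).le
  rw [centralBinomRatio_succ, centralBinomRatio_succ]
  linarith

lemma sum_antidiagonal_centralBinomRatio_mul (n : ℕ) :
    ∑ p ∈ antidiagonal n, centralBinomRatio p.1 * centralBinomRatio p.2 = 1 := by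
  induction n with
  | zero => simp [centralBinomRatio_zero]
  | succ k ih =>
    set c := centralBinomRatio
    -- `2 ∑ i c_i c_j = ∑ (i + j) c_i c_j` by the symmetry `i ↔ j` of the antidiagonal
    have hsymm (m : ℕ) : 2 * ∑ p ∈ antidiagonal m, (p.1 : ℝ) * (c p.1 * c p.2)
        = m * ∑ p ∈ antidiagonal m, c p.1 * c p.2 := by
      rw [two_mul]
      nth_rewrite 2 [← Nat.sum_antidiagonal_swap]
      rw [← sum_add_distrib, mul_sum]
      refine sum_congr rfl fun p hp => ?_
      rw [HasAntidiagonal.mem_antidiagonal] at hp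
      simp only [Prod.fst_swap, Prod.snd_swap, ← hp]
      push_cast
      ring
    -- `(i + 1) c_{i+1} = (i + 1/2) c_i`
    have hshift : ∑ p ∈ antidiagonal (k + 1), (p.1 : ℝ) * (c p.1 * c p.2)
        = ∑ p ∈ antidiagonal k, (p.1 : ℝ) * (c p.1 * c p.2) + 1 / 2 := by
      rw [Nat.sum_antidiagonal_succ, ← ih, sum_div, ← sum_add_distrib]
      simp only [Nat.cast_zero, zero_mul, zero_add]
      refine sum_congr rfl fun p _ => ?_
      simp only [c, centralBinomRatio_succ]
      field_simp
      push_cast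
      ring
    have hk := hsymm k
    have hk1 := hsymm (k + 1)
    rw [ih] at hk
    rw [hshift] at hk1
    push_cast at hk1
    exact mul_left_cancel₀ (by positivity : (k : ℝ) + 1 ≠ 0) (by linear_combination -hk1 + hk)

lemma cpoch_succ (s : ℂ) (k : ℕ) : cpoch s (k + 1) = cpoch s k * (s + k) := prod_range_succ _ k

lemma neg_one_pow_mul_cpoch_mul_cpoch_sub (s : ℂ) {n l : ℕ} (hl : l ≤ n) :
    (-1) ^ l * cpoch (1 - s - n) l * cpoch s (n - l) = cpoch s n := by
  induction l with
  | zero => simp [cpoch]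
  | succ l ih =>
    have hcast : ((n - (l + 1) : ℕ) : ℂ) = n - l - 1 := by
      rw [Nat.cast_sub hl]; push_cast; ring
    rw [← ih (by omega), show n - l = n - (l + 1) + 1 by omega, cpoch_succ, cpoch_succ, hcast]
    ring

lemma ofReal_centralBinomRatio (n : ℕ) :
    (centralBinomRatio n : ℂ) = cpoch (1 / 2) n / n.factorial := by
  induction n with
  | zero => simp [centralBinomRatio_zero, cpoch]
  | succ n ih =>
    rw [centralBinomRatio_succ, ofReal_mul, ih, cpoch_succ, Nat.factorial_succ]
    push_cast
    field_simp
    ring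

noncomputable def ω : ℂ := (-1 + Real.sqrt 3 * I) / 2

lemma ofReal_sqrt_three_sq : ((Real.sqrt 3 : ℝ) : ℂ) ^ 2 = 3 := by
  rw [← ofReal_pow, Real.sq_sqrt (by norm_num)]
  norm_num

lemma one_add_omega_add_omega_sq : 1 + ω + ω ^ 2 = 0 := by
  unfold ω
  linear_combination (((Real.sqrt 3 : ℝ) : ℂ) ^ 2 / 4) * I_sq - (1 / 4) * ofReal_sqrt_three_sq

lemma omega_pow_three : ω ^ 3 = 1 := by
  linear_combination (ω - 1) * one_add_omega_add_omega_sq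

lemma norm_omega : ‖ω‖ = 1 := by
  rw [← pow_eq_one_iff_of_nonneg (norm_nonneg ω) three_ne_zero, ← norm_pow, omega_pow_three,
    norm_one]

lemma conj_omega : conj ω = ω ^ 2 := by
  have : conj ω = (-1 - Real.sqrt 3 * I) / 2 := by
    simp [ω, map_ofNat]
    ring
  rw [this, ω]
  linear_combination (-((Real.sqrt 3 : ℝ) : ℂ) ^ 2 / 4) * I_sq + (1 / 4) * ofReal_sqrt_three_sq

lemma one_sub_I_mul_sqrt_three_div_two : (1 - I * Real.sqrt 3) / 2 = -ω := by
  rw [ω]; ring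

lemma two_mul_I_div_sqrt_three_sub_I : 2 * I / (Real.sqrt 3 - I) = ω := by
  have hne : (Real.sqrt 3 : ℂ) - I ≠ 0 := fun h => by simpa using congrArg im h
  rw [div_eq_iff hne, ω]
  linear_combination (((Real.sqrt 3 : ℝ) : ℂ) / 2) * I_sq - (I / 2) * ofReal_sqrt_three_sq

lemma sum_range_omega_pow_add_three (m : ℕ) :
    ∑ j ∈ range (m + 3), ω ^ j = ∑ j ∈ range m, ω ^ j := by
  simp only [sum_range_succ]
  linear_combination ω ^ m * one_add_omega_add_omega_sq

lemma norm_sum_range_omega_pow_le_one : ∀ m : ℕ, ‖∑ j ∈ range m, ω ^ j‖ ≤ 1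
  | 0 => by simp
  | 1 => by simp
  | 2 => by
    rw [sum_range_succ, sum_range_one, pow_zero, pow_one,
      show 1 + ω = -ω ^ 2 by linear_combination one_add_omega_add_omega_sq]
    simp [norm_omega]
  | m + 3 => by
    rw [sum_range_omega_pow_add_three]
    exact norm_sum_range_omega_pow_le_one m

/-- The Taylor coefficients of `(1 + u + u²)^(-1/2) = (1 - ω² u)^(-1/2) (1 - ω u)^(-1/2)`. -/
noncomputable def invSqrtCoeff (n : ℕ) : ℂ :=
  ∑ l ∈ range (n + 1), (centralBinomRatio l * centralBinomRatio (n - l) : ℝ) * ω ^ (n + l)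

/-- Summation by parts against the bounded partial sums of `ω ^ j`: the weights
`c_l c_{n-l}` decrease up to `n / 2` and then increase, so their total variation is `≤ 2 c_n`. -/
lemma norm_invSqrtCoeff_le (n : ℕ) : ‖invSqrtCoeff n‖ ≤ 3 * centralBinomRatio n := by
  set d : ℕ → ℝ := fun l => centralBinomRatio l * centralBinomRatio (n - l)
  have hvar : ∑ i ∈ range n, |d (i + 1) - d i| = d 0 + d n - 2 * d (n / 2) := by
    refine sum_range_abs_sub_eq_of_antitone_monotone d (Nat.div_le_self n 2)
      (fun i hi => ?_) (fun i hi hin => ?_)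
    · have := centralBinomRatio_succ_mul_le (i := i) (j := n - (i + 1)) (by omega)
      simp only [d, show n - i = n - (i + 1) + 1 by omega]
      linarith
    · have := centralBinomRatio_succ_mul_le (i := n - (i + 1)) (j := i) (by omega)
      simp only [d, show n - i = n - (i + 1) + 1 by omega]
      linarith
  have hd0 : d 0 = centralBinomRatio n := by simp [d, centralBinomRatio_zero]
  have hdn : d n = centralBinomRatio n := by simp [d, centralBinomRatio_zero]
  have hdm : 0 ≤ d (n / 2) := (mul_pos (centralBinomRatio_pos _) (centralBinomRatio_pos _)).le
  have hsum : invSqrtCoeff n = ω ^ n * ∑ l ∈ range (n + 1), d l • ω ^ l := by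
    simp only [invSqrtCoeff, mul_sum, pow_add, real_smul, d]
    exact sum_congr rfl fun l _ => by ring
  calc ‖invSqrtCoeff n‖ = ‖∑ l ∈ range (n + 1), d l • ω ^ l‖ := by
        rw [hsum, norm_mul, norm_pow, norm_omega, one_pow, one_mul]
    _ ≤ (|d n| + ∑ i ∈ range n, |d (i + 1) - d i|) * 1 :=
        norm_sum_range_smul_le d _ n norm_sum_range_omega_pow_le_one
    _ ≤ 3 * centralBinomRatio n := by
        rw [hvar, hd0, hdn, abs_of_pos (centralBinomRatio_pos n)]
        linarith

lemma stmt4Term_eq (n : ℕ) : stmt4Term n = invSqrtCoeff n / (n + 1) := by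
  have hfac : ((n + 1).factorial : ℂ) = (n + 1) * n.factorial := by
    rw [Nat.factorial_succ]; push_cast; ring
  rw [stmt4Term, invSqrtCoeff, sum_mul, sum_div, sum_mul, sum_div]
  refine sum_congr rfl fun l hl => ?_
  have hln : l ≤ n := Nat.lt_succ_iff.mp (mem_range.mp hl)
  have hrefl := neg_one_pow_mul_cpoch_mul_cpoch_sub (1 / 2) hln
  rw [show (1 : ℂ) - 1 / 2 - n = 1 / 2 - n by ring] at hrefl
  have hchoose : (n.choose l : ℂ) * l.factorial * (n - l).factorial = n.factorial := by
    exact_mod_cast Nat.choose_mul_factorial_mul_factorial hln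
  have hpoch : cpoch (1 / 2) n ≠ 0 := by
    have h := ofReal_ne_zero.2 (centralBinomRatio_pos n).ne'
    rw [ofReal_centralBinomRatio] at h
    exact (div_ne_zero_iff.1 h).1
  have hQ : cpoch (1 / 2 - n) l ≠ 0 := by
    rw [← hrefl] at hpoch
    exact right_ne_zero_of_mul (left_ne_zero_of_mul hpoch)
  have hsign : ((-1 : ℂ) ^ l) ^ 2 = 1 := by rw [← pow_mul, mul_comm, pow_mul]; norm_num
  rw [one_sub_I_mul_sqrt_three_div_two, two_mul_I_div_sqrt_three_sub_I, ofReal_mul,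
    ofReal_centralBinomRatio, ofReal_centralBinomRatio, ← hrefl, hfac, ← hchoose, neg_pow,
    pow_add]
  have hC : (n.choose l : ℂ) ≠ 0 := Nat.cast_ne_zero.2 (Nat.choose_pos hln).ne'
  generalize cpoch (1 / 2 - n) l = Q at hQ
  field_simp
  rw [hsign, mul_one]

lemma summable_centralBinomRatio_sub_succ :
    Summable fun n => centralBinomRatio n - centralBinomRatio (n + 1) := by
  refine summable_of_sum_range_le (c := 1) (fun n => ?_) (fun n => ?_)
  · rw [centralBinomRatio_sub_succ]
    exact (div_pos (centralBinomRatio_pos n) (by positivity)).le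
  · rw [sum_range_sub', centralBinomRatio_zero]
    linarith [centralBinomRatio_pos n]

lemma norm_stmt4Term_le (n : ℕ) :
    ‖stmt4Term n‖ ≤ 6 * (centralBinomRatio n - centralBinomRatio (n + 1)) := by
  have hn : ‖(n : ℂ) + 1‖ = n + 1 := by exact_mod_cast norm_natCast (n + 1)
  rw [stmt4Term_eq, norm_div, hn, centralBinomRatio_sub_succ]
  calc ‖invSqrtCoeff n‖ / (n + 1) ≤ 3 * centralBinomRatio n / (n + 1) := by
        gcongr; exact norm_invSqrtCoeff_le n
    _ = 6 * (centralBinomRatio n / (2 * (n + 1))) := by field_simp; ring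

lemma summable_norm_stmt4Term : Summable fun n => ‖stmt4Term n‖ :=
  (summable_centralBinomRatio_sub_succ.mul_left 6).of_nonneg_of_le (fun _ => norm_nonneg _)
    norm_stmt4Term_le

lemma summable_norm_centralBinomRatio_mul_pow {v : ℂ} (hv : ‖v‖ < 1) :
    Summable fun n => ‖(centralBinomRatio n : ℂ) * v ^ n‖ := by
  refine (summable_geometric_of_lt_one (norm_nonneg v) hv).of_nonneg_of_le
    (fun _ => norm_nonneg _) fun n => ?_
  rw [norm_mul, norm_pow, norm_real, Real.norm_of_nonneg (centralBinomRatio_pos n).le]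
  exact mul_le_of_le_one_left (by positivity) (centralBinomRatio_le_one n)

lemma tsum_centralBinomRatio_mul_pow_sq {v : ℂ} (hv : ‖v‖ < 1) :
    (∑' n, (centralBinomRatio n : ℂ) * v ^ n) ^ 2 = (1 - v)⁻¹ := by
  have hs := summable_norm_centralBinomRatio_mul_pow hv
  rw [sq, tsum_mul_tsum_eq_tsum_sum_antidiagonal_of_summable_norm hs hs,
    ← tsum_geometric_of_norm_lt_one hv]
  refine tsum_congr fun n => ?_
  calc ∑ p ∈ antidiagonal n,
        (centralBinomRatio p.1 : ℂ) * v ^ p.1 * (centralBinomRatio p.2 * v ^ p.2)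
      = ∑ p ∈ antidiagonal n,
        ((centralBinomRatio p.1 * centralBinomRatio p.2 : ℝ) : ℂ) * v ^ n :=
        sum_congr rfl fun p hp => by
          rw [← HasAntidiagonal.mem_antidiagonal.1 hp, pow_add]; push_cast; ring
    _ = v ^ n := by
        rw [← sum_mul, ← ofReal_sum, sum_antidiagonal_centralBinomRatio_mul, ofReal_one, one_mul]

/-- With `F v = ∑ c_n vⁿ` no complex square root is needed: `F v ^ 2 = (1 - v)⁻¹` and
`F (ω² u) = conj (F (ω u))`, so the product is the nonnegative real `‖F (ω u)‖²`, whose square is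
`(u² + u + 1)⁻¹`. -/
lemma tsum_invSqrtCoeff_mul_pow {u : ℝ} (hu : |u| < 1) :
    ∑' n, invSqrtCoeff n * (u : ℂ) ^ n = ((Real.sqrt (u ^ 2 + u + 1))⁻¹ : ℝ) := by
  set F : ℂ → ℂ := fun v => ∑' n, (centralBinomRatio n : ℂ) * v ^ n
  have hω : ‖ω * u‖ < 1 := by rwa [norm_mul, norm_omega, one_mul, norm_real, Real.norm_eq_abs]
  have hω2 : ‖ω ^ 2 * u‖ < 1 := by
    rwa [norm_mul, norm_pow, norm_omega, one_pow, one_mul, norm_real, Real.norm_eq_abs]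
  have hcauchy : ∑' n, invSqrtCoeff n * (u : ℂ) ^ n = F (ω ^ 2 * u) * F (ω * u) := by
    rw [tsum_mul_tsum_eq_tsum_sum_antidiagonal_of_summable_norm
      (summable_norm_centralBinomRatio_mul_pow hω2) (summable_norm_centralBinomRatio_mul_pow hω)]
    refine tsum_congr fun n => ?_
    rw [invSqrtCoeff, sum_mul, Nat.sum_antidiagonal_eq_sum_range_succ fun i j =>
      (centralBinomRatio i : ℂ) * (ω ^ 2 * u) ^ i * (centralBinomRatio j * (ω * u) ^ j)]
    refine sum_congr rfl fun l hl => ?_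
    obtain ⟨k, rfl⟩ : ∃ k, n = l + k := ⟨n - l, by have := mem_range.1 hl; omega⟩
    rw [Nat.add_sub_cancel_left]
    push_cast
    ring
  have hconj : F (ω ^ 2 * u) = conj (F (ω * u)) := by
    simp only [F, conj_tsum, map_mul, map_pow, conj_ofReal, conj_omega]
  have hsq : (F (ω ^ 2 * u) * F (ω * u)) ^ 2 = ((u ^ 2 + u + 1 : ℝ) : ℂ)⁻¹ := by
    rw [mul_pow, tsum_centralBinomRatio_mul_pow_sq hω2, tsum_centralBinomRatio_mul_pow_sq hω,
      ← mul_inv]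
    congr 1
    push_cast
    linear_combination (-(u : ℂ)) * one_add_omega_add_omega_sq + (u : ℂ) ^ 2 * omega_pow_three
  rw [hconj, conj_mul'] at hsq
  rw [hcauchy, hconj, conj_mul']
  norm_cast at hsq ⊢
  rw [← Real.sqrt_inv, ← hsq, Real.sqrt_sq (by positivity)]

lemma integral_Ioo_mul_pow (a : ℂ) (n : ℕ) :
    ∫ u in Set.Ioo (0 : ℝ) 1, a * (u : ℂ) ^ n = a / (n + 1) := by
  rw [integral_const_mul, ← integral_Ioc_eq_integral_Ioo,
    ← intervalIntegral.integral_of_le zero_le_one]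
  simp_rw [← ofReal_pow]
  rw [intervalIntegral.integral_ofReal, integral_pow]
  push_cast
  ring

lemma integral_Ioo_norm_mul_pow (a : ℂ) (n : ℕ) :
    ∫ u in Set.Ioo (0 : ℝ) 1, ‖a * (u : ℂ) ^ n‖ = ‖a / (n + 1)‖ := by
  have heq : Set.EqOn (fun u : ℝ => ‖a * (u : ℂ) ^ n‖) (fun u => ‖a‖ * u ^ n) (Set.Ioo 0 1) :=
    fun u hu => by simp only [norm_mul, norm_pow, norm_real, Real.norm_of_nonneg hu.1.le]
  have hn : ‖(n : ℂ) + 1‖ = n + 1 := by exact_mod_cast norm_natCast (n + 1)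
  rw [setIntegral_congr_fun measurableSet_Ioo heq, integral_const_mul,
    ← integral_Ioc_eq_integral_Ioo, ← intervalIntegral.integral_of_le zero_le_one, integral_pow,
    norm_div, hn]
  ring

lemma hasDerivAt_arsinh_two_mul_add_one_div_sqrt_three (u : ℝ) :
    HasDerivAt (fun x => Real.arsinh ((2 * x + 1) / Real.sqrt 3))
      (Real.sqrt (u ^ 2 + u + 1))⁻¹ u := by
  have hs3 : Real.sqrt 3 ^ 2 = 3 := Real.sq_sqrt (by norm_num)
  have hinner : HasDerivAt (fun x => (2 * x + 1) / Real.sqrt 3) (2 / Real.sqrt 3) u := by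
    simpa using (((hasDerivAt_id u).const_mul 2).add_const 1).div_const (Real.sqrt 3)
  refine ((Real.hasDerivAt_arsinh _).comp u hinner).congr_deriv ?_
  have h : 1 + ((2 * u + 1) / Real.sqrt 3) ^ 2 = (2 / Real.sqrt 3) ^ 2 * (u ^ 2 + u + 1) := by
    field_simp
    rw [hs3]
    ring
  rw [h, Real.sqrt_mul (by positivity), Real.sqrt_sq (by positivity)]
  field_simp

lemma integral_Ioo_inv_sqrt :
    ∫ u in Set.Ioo (0 : ℝ) 1, (Real.sqrt (u ^ 2 + u + 1))⁻¹
      = Real.log (1 + 2 / Real.sqrt 3) := by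
  have hs3 : 0 < Real.sqrt 3 := by positivity
  have hs3sq : Real.sqrt 3 ^ 2 = 3 := Real.sq_sqrt (by norm_num)
  have hcont : Continuous fun u : ℝ => (Real.sqrt (u ^ 2 + u + 1))⁻¹ :=
    (Real.continuous_sqrt.comp (by fun_prop)).inv₀ fun u =>
      (Real.sqrt_pos.2 (by nlinarith [sq_nonneg (2 * u + 1)])).ne'
  rw [← integral_Ioc_eq_integral_Ioo, ← intervalIntegral.integral_of_le zero_le_one,
    intervalIntegral.integral_eq_sub_of_hasDerivAt
      (fun x _ => hasDerivAt_arsinh_two_mul_add_one_div_sqrt_three x)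
      (hcont.intervalIntegrable 0 1)]
  have h1 : Real.arsinh ((2 * 1 + 1) / Real.sqrt 3) = Real.log (Real.sqrt 3 + 2) := by
    rw [Real.arsinh, show (2 * 1 + 1 : ℝ) / Real.sqrt 3 = Real.sqrt 3 by field_simp; linarith,
      hs3sq, show (1 + 3 : ℝ) = 2 ^ 2 by norm_num, Real.sqrt_sq (by norm_num)]
  have h0 : Real.arsinh ((2 * 0 + 1) / Real.sqrt 3) = Real.log (Real.sqrt 3) := by
    have h43 : 1 + (1 / Real.sqrt 3) ^ 2 = (2 / Real.sqrt 3) ^ 2 := by field_simp; linarith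
    rw [Real.arsinh, mul_zero, zero_add, h43, Real.sqrt_sq (by positivity)]
    congr 1
    field_simp
    linarith
  rw [h1, h0, ← Real.log_div (by positivity) hs3.ne', add_div, div_self hs3.ne', add_comm]

end LogSeries

open LogSeries MeasureTheory

theorem stmt4 :
    Summable stmt4Term ∧
      ((Real.log (1 + 2 / Real.sqrt 3) : ℂ) = ∑' n : ℕ, stmt4Term n) := by
  refine ⟨summable_norm_stmt4Term.of_norm, ?_⟩
  have hint (n : ℕ) : IntegrableOn (fun u : ℝ => invSqrtCoeff n * (u : ℂ) ^ n) (Set.Ioo 0 1) :=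
    (by fun_prop : Continuous fun u : ℝ => invSqrtCoeff n * (u : ℂ) ^ n)
      |>.integrableOn_Icc.mono_set Set.Ioo_subset_Icc_self
  have hsum : Summable fun n => ∫ u in Set.Ioo (0 : ℝ) 1, ‖invSqrtCoeff n * (u : ℂ) ^ n‖ := by
    simpa only [integral_Ioo_norm_mul_pow, ← stmt4Term_eq] using summable_norm_stmt4Term
  calc (Real.log (1 + 2 / Real.sqrt 3) : ℂ)
      = ∫ u in Set.Ioo (0 : ℝ) 1, (((Real.sqrt (u ^ 2 + u + 1))⁻¹ : ℝ) : ℂ) := by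
        rw [integral_complex_ofReal, integral_Ioo_inv_sqrt]
    _ = ∫ u in Set.Ioo (0 : ℝ) 1, ∑' n, invSqrtCoeff n * (u : ℂ) ^ n :=
        setIntegral_congr_fun measurableSet_Ioo fun u hu =>
          (tsum_invSqrtCoeff_mul_pow (abs_lt.2 ⟨by linarith [hu.1], hu.2⟩)).symm
    _ = ∑' n, ∫ u in Set.Ioo (0 : ℝ) 1, invSqrtCoeff n * (u : ℂ) ^ n :=
        (integral_tsum_of_summable_integral_norm hint hsum).symm
    _ = ∑' n, stmt4Term n := by simp only [integral_Ioo_mul_pow, stmt4Term_eq]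
end
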